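/- arXiv:2506.07021 — 2 statements merged into one kernel-verified Lean document; each statement's English description precedes it below -/
import Mathlib

section
/- Let x be a real number with 0 < x < 1 and t a positive integer. Then (t·x^{t+1} − (t−1)·x^t)² ≤ 10·x^t. -/
lemma auxA (s : ℝ) (hs0 : 0 ≤ s) (hs1 : s ≤ 1) (n : ℕ) :
    (n : ℝ) * (1 - s) * s ^ n ≤ 1 := by
  have h1 : (n : ℝ) * s ^ n ≤ ∑ k ∈ Finset.range n, s ^ k := by
    calc (n : ℝ) * s ^ n = ∑ _k ∈ Finset.range n, s ^ n := by
          simp [Finset.sum_const, nsmul_eq_mul]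
      _ ≤ ∑ k ∈ Finset.range n, s ^ k :=
          Finset.sum_le_sum fun k hk =>
            pow_le_pow_of_le_one hs0 hs1 (le_of_lt (Finset.mem_range.mp hk))
  have h2 : (∑ k ∈ Finset.range n, s ^ k) * (s - 1) = s ^ n - 1 := geom_sum_mul s n
  have hp : 0 ≤ s ^ n := pow_nonneg hs0 n
  nlinarith [h1, h2, hp]

theorem stmt12 (x : ℝ) (hx0 : 0 < x) (hx1 : x < 1) (t : ℕ) (ht : 1 ≤ t) :
    ((t : ℝ) * x ^ (t + 1) - ((t : ℝ) - 1) * x ^ t) ^ 2 ≤ 10 * x ^ t := by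
  set s := Real.sqrt x with hsdef
  have hs0 : 0 ≤ s := Real.sqrt_nonneg x
  have hs2 : s ^ 2 = x := Real.sq_sqrt hx0.le
  have hs1 : s ≤ 1 := by
    rw [show (1:ℝ) = Real.sqrt 1 by simp]
    exact Real.sqrt_le_sqrt hx1.le
  have hA : (t : ℝ) * (1 - s) * s ^ t ≤ 1 := auxA s hs0 hs1 t
  have hAnn : 0 ≤ (t : ℝ) * (1 - s) * s ^ t :=
    mul_nonneg (mul_nonneg (Nat.cast_nonneg t) (by linarith)) (pow_nonneg hs0 t)
  have hst : 0 ≤ s ^ t := pow_nonneg hs0 t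
  have hxt : x ^ t = (s ^ t) ^ 2 := by rw [← hs2, ← pow_mul, ← pow_mul, Nat.mul_comm]
  -- key: u * s^t ≤ 2 where u = t(1-x)
  have hkey : (t : ℝ) * (1 - x) * s ^ t ≤ 2 := by
    have : (t : ℝ) * (1 - x) * s ^ t = ((t : ℝ) * (1 - s) * s ^ t) * (1 + s) := by
      rw [← hs2]; ring
    rw [this]
    nlinarith [hA, hAnn, hs1, hs0]
  have hkeynn : 0 ≤ (t : ℝ) * (1 - x) * s ^ t :=
    mul_nonneg (mul_nonneg (Nat.cast_nonneg t) (by linarith)) (pow_nonneg hs0 t)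
  have hpu2 : x ^ t * ((t : ℝ) * (1 - x)) ^ 2 ≤ 4 := by
    rw [hxt]
    nlinarith [hkey, hkeynn]
  have hp1 : x ^ t ≤ 1 := pow_le_one₀ hx0.le hx1.le
  have hp0 : 0 < x ^ t := pow_pos hx0 t
  have hu0 : 0 ≤ (t : ℝ) * (1 - x) :=
    mul_nonneg (Nat.cast_nonneg t) (by linarith)
  have hexp : (t : ℝ) * x ^ (t + 1) - ((t : ℝ) - 1) * x ^ t
      = x ^ t * (1 - (t : ℝ) * (1 - x)) := by
    rw [pow_succ]; ring
  rw [hexp]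
  nlinarith [hpu2, hp1, hp0, hu0, mul_nonneg hp0.le hu0, sq_nonneg (1 - (t:ℝ)*(1-x))]
end

section
/- Let C ∈ ℝ^{n×n} and π_R ∈ ℝ^n, and suppose lim_{k→∞} π_Rᵀ C^k = n·c·uᵀ exists (as a row vector limit) where the limit has squared Euclidean norm S := lim_{k→∞} ‖π_Rᵀ C^k‖². Define M₁ := ‖π_Rᵀ C‖² + ∑_{t=1}^{∞} ‖π_Rᵀ(C^{t+1} − C^t)‖² and M₉ := ∑_{t=1}^{∞} t‖π_Rᵀ(C^{t+1} − C^t)‖, assuming both are finite. Then S ≤ 10·max{M₁, M₉, M₁M₉}. -/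
/-- Euclidean norm of a finite real vector. -/
noncomputable def eNorm {n : ℕ} (v : Fin n → ℝ) : ℝ :=
  Real.sqrt (∑ i, (v i) ^ 2)

/-! Telescoping gives `‖π_Rᵀ C^(m+1)‖ ≤ ‖π_Rᵀ C‖ + ∑_{t<m} d_t` with
`d_t = ‖π_Rᵀ (C^(t+2) - C^(t+1))‖`. Splitting `d_t = √((t+1) d_t) · √(d_t / (t+1))`,
Cauchy–Schwarz bounds `(∑ d_t)²` by `M₉ · ∑ d_t / (t+1)`, and a second Cauchy–Schwarz together
with `∑ 1/(t+1)² ≤ 2` bounds `∑ d_t / (t+1)` by `√(2 ∑ d_t²) ≤ 1 + M₁`. So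
`‖π_Rᵀ C^(m+1)‖² ≤ 2 M₁ + 2 M₉ (1 + M₁)` for every `m`, and the limit `S` inherits the bound. -/

open Finset

lemma norm_le_norm_one_add_sum_norm_sub {E : Type*} [SeminormedAddGroup E] (x : ℕ → E) (m : ℕ) :
    ‖x (m + 1)‖ ≤ ‖x 1‖ + ∑ t ∈ range m, ‖x (t + 2) - x (t + 1)‖ := by
  induction m with
  | zero => simp
  | succ m ih =>
    rw [sum_range_succ, ← add_assoc]
    exact (norm_le_norm_add_norm_sub' _ (x (m + 1))).trans (by gcongr)

lemma sum_range_inv_succ_sq_le_two (m : ℕ) : ∑ t ∈ range m, (((t : ℝ) + 1) ^ 2)⁻¹ ≤ 2 := by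
  have h := sum_Ioo_inv_sq_le (α := ℝ) 0 (m + 1)
  rw [← Ico_add_one_left_eq_Ioo, ← sum_Ico_add' (fun i : ℕ => ((i : ℝ) ^ 2)⁻¹),
    ← range_eq_Ico] at h
  simpa using h

lemma sq_sum_div_add_one_le (d : ℕ → ℝ) (m : ℕ) :
    (∑ t ∈ range m, d t / ((t : ℝ) + 1)) ^ 2 ≤ 2 * ∑ t ∈ range m, d t ^ 2 := by
  calc (∑ t ∈ range m, d t / ((t : ℝ) + 1)) ^ 2
      ≤ (∑ t ∈ range m, d t ^ 2) * ∑ t ∈ range m, (((t : ℝ) + 1)⁻¹) ^ 2 := by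
        simpa only [div_eq_mul_inv] using sum_mul_sq_le_sq_mul_sq _ d _
    _ ≤ (∑ t ∈ range m, d t ^ 2) * 2 := by
        simp only [inv_pow]
        exact mul_le_mul_of_nonneg_left (sum_range_inv_succ_sq_le_two m)
          (sum_nonneg fun t _ => sq_nonneg _)
    _ = 2 * ∑ t ∈ range m, d t ^ 2 := mul_comm _ _

lemma sq_sum_range_le_sum_mul_sum_div {d : ℕ → ℝ} (hd : ∀ t, 0 ≤ d t) (m : ℕ) :
    (∑ t ∈ range m, d t) ^ 2 ≤
      (∑ t ∈ range m, ((t : ℝ) + 1) * d t) * ∑ t ∈ range m, d t / ((t : ℝ) + 1) :=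
  sum_sq_le_sum_mul_sum_of_sq_le_mul _ (fun t _ => mul_nonneg (by positivity) (hd t))
    (fun t _ => div_nonneg (hd t) (by positivity))
    (fun t _ => by field_simp; rfl)

lemma sq_sum_range_le_tsum_mul_one_add_tsum_sq {d : ℕ → ℝ} (hd : ∀ t, 0 ≤ d t)
    (hsq : Summable fun t => d t ^ 2) (hw : Summable fun t : ℕ => ((t : ℝ) + 1) * d t)
    (m : ℕ) :
    (∑ t ∈ range m, d t) ^ 2 ≤ (∑' t : ℕ, ((t : ℝ) + 1) * d t) * (1 + ∑' t, d t ^ 2) := by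
  set D := ∑' t, d t ^ 2
  have hD : 0 ≤ D := tsum_nonneg fun t => sq_nonneg _
  have hG : ∑ t ∈ range m, d t / ((t : ℝ) + 1) ≤ 1 + D := by
    refine abs_le_of_sq_le_sq' ?_ (by positivity) |>.2
    calc (∑ t ∈ range m, d t / ((t : ℝ) + 1)) ^ 2 ≤ 2 * ∑ t ∈ range m, d t ^ 2 :=
          sq_sum_div_add_one_le d m
      _ ≤ 2 * D := by gcongr; exact hsq.sum_le_tsum _ fun t _ => sq_nonneg _
      _ ≤ (1 + D) ^ 2 := by nlinarith [sq_nonneg (1 - D)]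
  calc (∑ t ∈ range m, d t) ^ 2
      ≤ (∑ t ∈ range m, ((t : ℝ) + 1) * d t) * ∑ t ∈ range m, d t / ((t : ℝ) + 1) :=
        sq_sum_range_le_sum_mul_sum_div hd m
    _ ≤ (∑' t : ℕ, ((t : ℝ) + 1) * d t) * (1 + D) := by
        gcongr
        · exact sum_nonneg fun t _ => div_nonneg (hd t) (by positivity)
        · exact tsum_nonneg fun t => mul_nonneg (by positivity) (hd t)
        · exact hw.sum_le_tsum _ fun t _ => mul_nonneg (by positivity) (hd t)

lemma norm_sq_le_of_summable_norm_sub {E : Type*} [SeminormedAddGroup E] {x : ℕ → E}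
    {M₁ M₉ : ℝ} (hsq : Summable fun t => ‖x (t + 2) - x (t + 1)‖ ^ 2)
    (hM₁ : M₁ = ‖x 1‖ ^ 2 + ∑' t, ‖x (t + 2) - x (t + 1)‖ ^ 2)
    (hw : Summable fun t : ℕ => ((t : ℝ) + 1) * ‖x (t + 2) - x (t + 1)‖)
    (hM₉ : M₉ = ∑' t : ℕ, ((t : ℝ) + 1) * ‖x (t + 2) - x (t + 1)‖) (m : ℕ) :
    ‖x (m + 1)‖ ^ 2 ≤ 2 * M₁ + 2 * (M₉ * (1 + M₁)) := by
  set F := ∑ t ∈ range m, ‖x (t + 2) - x (t + 1)‖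
  set D := ∑' t, ‖x (t + 2) - x (t + 1)‖ ^ 2
  have hF : F ^ 2 ≤ M₉ * (1 + D) :=
    hM₉ ▸ sq_sum_range_le_tsum_mul_one_add_tsum_sq (fun t => norm_nonneg _) hsq hw m
  have hD : D ≤ M₁ := by rw [hM₁]; exact le_add_of_nonneg_left (sq_nonneg _)
  have hx₁ : ‖x 1‖ ^ 2 ≤ M₁ := by
    rw [hM₁]; exact le_add_of_nonneg_right (tsum_nonneg fun t => by positivity)
  have hM₉D : M₉ * D ≤ M₉ * M₁ :=
    mul_le_mul_of_nonneg_left hD (hM₉ ▸ tsum_nonneg fun t => by positivity)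
  calc ‖x (m + 1)‖ ^ 2 ≤ (‖x 1‖ + F) ^ 2 := by
        gcongr; exact norm_le_norm_one_add_sum_norm_sub x m
    _ ≤ 2 * ‖x 1‖ ^ 2 + 2 * F ^ 2 := by nlinarith [sq_nonneg (‖x 1‖ - F)]
    _ ≤ 2 * M₁ + 2 * (M₉ * (1 + M₁)) := by linarith

lemma eNorm_eq_norm_toLp {n : ℕ} (v : Fin n → ℝ) : eNorm v = ‖WithLp.toLp 2 v‖ := by
  simp [eNorm, EuclideanSpace.norm_eq, sq_abs]

theorem stmt19 (n : ℕ) (C : Matrix (Fin n) (Fin n) ℝ) (πR : Fin n → ℝ) (S M₁ M₉ : ℝ)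
    (hS : Filter.Tendsto (fun k : ℕ => (eNorm (Matrix.vecMul πR (C ^ k))) ^ 2)
      Filter.atTop (nhds S))
    (hsum1 : Summable (fun t : ℕ => (eNorm (Matrix.vecMul πR (C ^ (t + 2) - C ^ (t + 1)))) ^ 2))
    (hM1 : M₁ = (eNorm (Matrix.vecMul πR C)) ^ 2 +
      ∑' t : ℕ, (eNorm (Matrix.vecMul πR (C ^ (t + 2) - C ^ (t + 1)))) ^ 2)
    (hsum9 : Summable (fun t : ℕ =>
      ((t : ℝ) + 1) * eNorm (Matrix.vecMul πR (C ^ (t + 2) - C ^ (t + 1)))))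
    (hM9 : M₉ = ∑' t : ℕ,
      ((t : ℝ) + 1) * eNorm (Matrix.vecMul πR (C ^ (t + 2) - C ^ (t + 1)))) :
    S ≤ 10 * max M₁ (max M₉ (M₁ * M₉)) := by
  set x : ℕ → EuclideanSpace ℝ (Fin n) := fun k => WithLp.toLp 2 (Matrix.vecMul πR (C ^ k))
  have hx (k : ℕ) : eNorm (Matrix.vecMul πR (C ^ k)) = ‖x k‖ := eNorm_eq_norm_toLp _
  have hx₁ : eNorm (Matrix.vecMul πR C) = ‖x 1‖ := by rw [← hx, pow_one]
  have hΔ (k l : ℕ) : eNorm (Matrix.vecMul πR (C ^ k - C ^ l)) = ‖x k - x l‖ := by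
    rw [eNorm_eq_norm_toLp, Matrix.vecMul_sub, WithLp.toLp_sub]
  simp only [hΔ, hx, hx₁] at hS hsum1 hM1 hsum9 hM9
  have hbound : S ≤ 2 * M₁ + 2 * (M₉ * (1 + M₁)) :=
    le_of_tendsto' ((Filter.tendsto_add_atTop_iff_nat 1).2 hS)
      (norm_sq_le_of_summable_norm_sub hsum1 hM1 hsum9 hM9)
  have hM₁ : 0 ≤ M₁ := by rw [hM1]; positivity
  have h₁ := le_max_left M₁ (max M₉ (M₁ * M₉))
  have h₉ := (le_max_left M₉ (M₁ * M₉)).trans (le_max_right M₁ _)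
  have h₁₉ := (le_max_right M₉ (M₁ * M₉)).trans (le_max_right M₁ _)
  linarith
end
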